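/- Necessary bound on the parameter: Under the standing assumptions, let f : [0,∞) → ℝ satisfy hypotheses (H) with constant c₁ > 0, and let λ > 0. If the problem (P(λf)) admits a solution, then λ ≤ λ_m(Ω)/c₁. -/

import Mathlib

open MeasureTheory Set

/-- The `m`-boundary of a set `Ω`. -/
def mBoundary {X : Type*} [MeasurableSpace X] (m : X → MeasureTheory.Measure X)
    (Ω : Set X) : Set X :=
  {x | x ∉ Ω ∧ 0 < m x Ω}

/-- The `m`-closure of a set `Ω`. -/
def mClosure {X : Type*} [MeasurableSpace X] (m : X → MeasureTheory.Measure X)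
    (Ω : Set X) : Set X :=
  Ω ∪ mBoundary m Ω

/-- The nonlocal `m`-Laplacian. -/
noncomputable def deltaM {X : Type*} [MeasurableSpace X] (m : X → MeasureTheory.Measure X)
    (u : X → ℝ) (x : X) : ℝ :=
  ∫ y, (u y - u x) ∂(m x)

/-- `m` is a random walk: each `m x` is a probability measure and `x ↦ m x A` is measurable. -/
def IsRandomWalk {X : Type*} [MeasurableSpace X] (m : X → MeasureTheory.Measure X) : Prop :=
  (∀ x, IsProbabilityMeasure (m x)) ∧
    ∀ A : Set X, MeasurableSet A → Measurable fun x => m x A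

/-- `ν` is reversible with respect to the random walk `m`. -/
def Reversible {X : Type*} [MeasurableSpace X] (m : X → MeasureTheory.Measure X)
    (ν : MeasureTheory.Measure X) : Prop :=
  ∀ F : X → X → ℝ, Measurable (Function.uncurry F) → (∃ C, ∀ x y, |F x y| ≤ C) →
    ∫ x, (∫ y, F x y ∂(m x)) ∂ν = ∫ x, (∫ y, F y x ∂(m x)) ∂ν

/-- `Ω` is `m`-connected with respect to `ν`. -/
def mConnected {X : Type*} [MeasurableSpace X] (m : X → MeasureTheory.Measure X)
    (ν : MeasureTheory.Measure X) (Ω : Set X) : Prop :=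
  ∀ A B : Set X, MeasurableSet A → MeasurableSet B → A ⊆ Ω → B ⊆ Ω → A ∪ B = Ω →
    ν A ≠ 0 → ν B ≠ 0 → 0 < ∫ x in A, (m x B).toReal ∂ν

/-- Membership in `L²₀(Ω_m, ν)`: square integrable on `Ω_m`, vanishing `ν`-a.e. on the
`m`-boundary, extended by `0` outside `Ω_m`. -/
def MemL20 {X : Type*} [MeasurableSpace X] (m : X → MeasureTheory.Measure X)
    (ν : MeasureTheory.Measure X) (Ω : Set X) (u : X → ℝ) : Prop :=
  Measurable u ∧ MeasureTheory.MemLp u 2 (ν.restrict (mClosure m Ω)) ∧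
    (∀ᵐ x ∂(ν.restrict (mBoundary m Ω)), u x = 0) ∧ ∀ x ∉ mClosure m Ω, u x = 0

/-- The nonlocal Dirichlet energy `(1/2)∬_{Ω_m×Ω_m} |u(y)-u(x)|² dm_x(y) dν(x)`. -/
noncomputable def gradEnergy {X : Type*} [MeasurableSpace X] (m : X → MeasureTheory.Measure X)
    (ν : MeasureTheory.Measure X) (Ω : Set X) (u : X → ℝ) : ℝ :=
  (1 / 2) * ∫ x in mClosure m Ω, (∫ y in mClosure m Ω, (u y - u x) ^ 2 ∂(m x)) ∂ν

/-- The standing assumptions of the paper: reversible random walk space, `Ω` `m`-connected with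
`0 < ν(Ω) < ν(Ω_m) < ∞`, a 2-Poincaré inequality with first eigenvalue `lam = λ_m(Ω)` attained
by an eigenfunction `φ` with `0 < α ≤ φ ≤ M` a.e. on `Ω` and `φ = 0` on `∂_mΩ`. -/
structure Standing {X : Type*} [MeasurableSpace X] (m : X → MeasureTheory.Measure X)
    (ν : MeasureTheory.Measure X) (Ω : Set X) (lam : ℝ) (φ : X → ℝ) (α M : ℝ) : Prop where
  hrw : IsRandomWalk m
  hrev : Reversible m ν
  hsigma : MeasureTheory.SigmaFinite ν
  hmeasΩ : MeasurableSet Ω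
  hconn : mConnected m ν Ω
  hpos : 0 < ν Ω
  hlt : ν Ω < ν (mClosure m Ω)
  hfin : ν (mClosure m Ω) < ⊤
  hlamPos : 0 < lam
  hpoincare : ∀ u : X → ℝ, MemL20 m ν Ω u →
    lam * ∫ x in Ω, u x ^ 2 ∂ν ≤ gradEnergy m ν Ω u
  hphiMem : MemL20 m ν Ω φ
  heig : ∀ᵐ x ∂(ν.restrict Ω), -(deltaM m φ x) = lam * φ x
  halphaPos : 0 < α
  halphaM : α ≤ M
  hphiLB : ∀ᵐ x ∂(ν.restrict Ω), α ≤ φ x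
  hphiUB : ∀ᵐ x ∂(ν.restrict Ω), φ x ≤ M

/-- Essential boundedness on a set `S` with respect to `ν`. -/
def IsBdd {X : Type*} [MeasurableSpace X] (ν : MeasureTheory.Measure X) (S : Set X)
    (u : X → ℝ) : Prop :=
  ∃ C : ℝ, ∀ᵐ x ∂(ν.restrict S), |u x| ≤ C

/-- A (nonnegative) solution of the Gelfand-type problem `(P(λ f))`. -/
def IsSol {X : Type*} [MeasurableSpace X] (m : X → MeasureTheory.Measure X)
    (ν : MeasureTheory.Measure X) (Ω : Set X) (lam : ℝ) (f : ℝ → ℝ) (u : X → ℝ) : Prop :=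
  MemL20 m ν Ω u ∧ (∀ᵐ x ∂(ν.restrict (mClosure m Ω)), 0 ≤ u x) ∧
    ∀ᵐ x ∂(ν.restrict Ω), -(deltaM m u x) = lam * f (u x)

/-- A solution of `(P(λ f))` without a sign constraint. -/
def IsSolNS {X : Type*} [MeasurableSpace X] (m : X → MeasureTheory.Measure X)
    (ν : MeasureTheory.Measure X) (Ω : Set X) (lam : ℝ) (f : ℝ → ℝ) (u : X → ℝ) : Prop :=
  MemL20 m ν Ω u ∧ ∀ᵐ x ∂(ν.restrict Ω), -(deltaM m u x) = lam * f (u x)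

/-- A minimal solution of `(P(λ f))`. -/
def IsMinimalSol {X : Type*} [MeasurableSpace X] (m : X → MeasureTheory.Measure X)
    (ν : MeasureTheory.Measure X) (Ω : Set X) (lam : ℝ) (f : ℝ → ℝ) (u : X → ℝ) : Prop :=
  IsSol m ν Ω lam f u ∧
    ∀ v : X → ℝ, IsSol m ν Ω lam f v → ∀ᵐ x ∂(ν.restrict (mClosure m Ω)), u x ≤ v x

/-- The extremal parameter `λ*`. -/
noncomputable def lamStar {X : Type*} [MeasurableSpace X] (m : X → MeasureTheory.Measure X)
    (ν : MeasureTheory.Measure X) (Ω : Set X) (f : ℝ → ℝ) : ℝ :=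
  sSup {lam : ℝ | 0 ≤ lam ∧ ∃ u : X → ℝ, IsSol m ν Ω lam f u ∧ IsBdd ν (mClosure m Ω) u}

/-- Hypotheses (H) on the nonlinearity `f` with constant `c₁`. -/
def HypH (f : ℝ → ℝ) (c₁ : ℝ) : Prop :=
  ContinuousOn f (Set.Ici 0) ∧ MonotoneOn f (Set.Ici 0) ∧ 0 < f 0 ∧ 0 < c₁ ∧
    ∀ s : ℝ, 0 ≤ s → c₁ * s ≤ f s

/-- The stability quadratic form `Q_u(v)` with linearized potential `fp ∘ u` (where `fp = f'`). -/
noncomputable def Qform {X : Type*} [MeasurableSpace X] (m : X → MeasureTheory.Measure X)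
    (ν : MeasureTheory.Measure X) (Ω : Set X) (lam : ℝ) (fp : ℝ → ℝ) (u v : X → ℝ) : ℝ :=
  gradEnergy m ν Ω v - lam * ∫ x in Ω, fp (u x) * v x ^ 2 ∂ν

/-- Stability of a solution: `Q_u(v) ≥ 0` for all test functions `v ∈ L^∞ ∩ L²₀`. -/
def IsStable {X : Type*} [MeasurableSpace X] (m : X → MeasureTheory.Measure X)
    (ν : MeasureTheory.Measure X) (Ω : Set X) (lam : ℝ) (fp : ℝ → ℝ) (u : X → ℝ) : Prop :=
  ∀ v : X → ℝ, MemL20 m ν Ω v → IsBdd ν (mClosure m Ω) v → 0 ≤ Qform m ν Ω lam fp u v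

/-- The first eigenvalue `μ₁(u)` of the linearized operator, as an infimum of `Q_u` over
normalized test functions. -/
noncomputable def mu1 {X : Type*} [MeasurableSpace X] (m : X → MeasureTheory.Measure X)
    (ν : MeasureTheory.Measure X) (Ω : Set X) (lam : ℝ) (fp : ℝ → ℝ) (u : X → ℝ) : ℝ :=
  sInf {r : ℝ | ∃ v : X → ℝ, MemL20 m ν Ω v ∧ (∫ x in Ω, v x ^ 2 ∂ν) = 1 ∧
    r = Qform m ν Ω lam fp u v}


/-!
Test the equation `-Δ_m u = l f(u)` against the positive eigenfunction `φ`. Reversibility of `ν`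
gives Green's formula `∫_Ω φ ∫ u dm_x = ∫_Ω u ∫ φ dm_x = (1 - λ_m) ∫_Ω φ u`, while
`f(u) ≥ c₁ u` gives `φ ∫ u dm_x = φ (u - l f(u)) ≤ (1 - l c₁) φ u` pointwise. Hence
`l c₁ ∫_Ω φ u ≤ λ_m ∫_Ω φ u`, and `∫_Ω φ u > 0` because `u ≥ l f(u) > 0` on `Ω`.

Reversibility is only assumed for bounded integrands, so it is first extended to all nonnegative
measurable ones by truncating to the spanning sets of `ν` and monotone convergence; in particular
`ν`-null sets are `m_x`-null for `ν`-a.e. `x`.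
-/

open ProbabilityTheory Function
open scoped ENNReal

namespace IsRandomWalk

variable {X : Type*} [MeasurableSpace X] {m : X → Measure X}

def toKernel (hm : IsRandomWalk m) : Kernel X X :=
  ⟨m, Measure.measurable_of_measurable_coe m hm.2⟩

instance isMarkovKernel_toKernel (hm : IsRandomWalk m) : IsMarkovKernel hm.toKernel :=
  ⟨hm.1⟩

lemma measurable_lintegral (hm : IsRandomWalk m) {F : X → X → ℝ≥0∞}
    (hF : Measurable (uncurry F)) : Measurable fun x => ∫⁻ y, F x y ∂m x :=
  hF.lintegral_kernel_prod_right (κ := hm.toKernel)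

variable {ν : Measure X}

lemma lintegral_lintegral_iSup (hm : IsRandomWalk m) {F : ℕ → X → X → ℝ≥0∞}
    (hF : ∀ n, Measurable (uncurry (F n))) (hF_mono : Monotone F) :
    ∫⁻ x, ∫⁻ y, ⨆ n, F n x y ∂m x ∂ν = ⨆ n, ∫⁻ x, ∫⁻ y, F n x y ∂m x ∂ν := by
  calc ∫⁻ x, ∫⁻ y, ⨆ n, F n x y ∂m x ∂ν = ∫⁻ x, ⨆ n, ∫⁻ y, F n x y ∂m x ∂ν :=
        lintegral_congr fun x =>
          lintegral_iSup (fun n => (hF n).comp measurable_prodMk_left) fun _ _ h => hF_mono h x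
    _ = ⨆ n, ∫⁻ x, ∫⁻ y, F n x y ∂m x ∂ν :=
        lintegral_iSup (fun n => hm.measurable_lintegral (hF n))
          fun _ _ h x => lintegral_mono (hF_mono h x)

lemma lintegral_lintegral_le (hm : IsRandomWalk m) {F : X → X → ℝ≥0∞} {S : Set X}
    (hS : MeasurableSet S) {C : ℝ≥0∞} (hFC : ∀ x y, F x y ≤ C)
    (hFS : ∀ x y, F x y ≠ 0 → x ∈ S) :
    ∫⁻ x, ∫⁻ y, F x y ∂m x ∂ν ≤ C * ν S := by
  have hinner : ∀ x, ∫⁻ y, F x y ∂m x ≤ S.indicator (fun _ => C) x := by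
    intro x
    have := hm.1 x
    by_cases hx : x ∈ S
    · rw [indicator_of_mem hx]
      exact (lintegral_mono (hFC x)).trans_eq (by simp)
    · have hzero : ∀ y, F x y = 0 := fun y => by_contra fun h => hx (hFS x y h)
      simp [hzero]
  calc ∫⁻ x, ∫⁻ y, F x y ∂m x ∂ν ≤ ∫⁻ x, S.indicator (fun _ => C) x ∂ν := lintegral_mono hinner
    _ = C * ν S := by rw [lintegral_indicator hS, setLIntegral_const]

lemma integral_integral_toReal (hm : IsRandomWalk m) {F : X → X → ℝ≥0∞}
    (hF : Measurable (uncurry F)) {C : ℝ≥0∞} (hC : C ≠ ∞) (hFC : ∀ x y, F x y ≤ C) :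
    ∫ x, ∫ y, (F x y).toReal ∂m x ∂ν = (∫⁻ x, ∫⁻ y, F x y ∂m x ∂ν).toReal := by
  have hinner : ∀ x, ∫⁻ y, F x y ∂m x ≤ C := fun x => by
    have := hm.1 x
    exact (lintegral_mono (hFC x)).trans_eq (by simp)
  rw [← integral_toReal (hm.measurable_lintegral hF).aemeasurable
    (ae_of_all _ fun x => (hinner x).trans_lt hC.lt_top)]
  refine integral_congr_ae (ae_of_all _ fun x => integral_toReal ?_ ?_)
  · exact (hF.comp measurable_prodMk_left).aemeasurable
  · exact ae_of_all _ fun y => (hFC x y).trans_lt hC.lt_top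

end IsRandomWalk

section Truncation

variable {X : Type*} [MeasurableSpace X] (ν : Measure X) [SigmaFinite ν]

noncomputable def spanningTrunc (F : X → X → ℝ≥0∞) (n : ℕ) (x y : X) : ℝ≥0∞ :=
  (spanningSets ν n ×ˢ spanningSets ν n).indicator (fun p => min (uncurry F p) n) (x, y)

variable {ν} {F : X → X → ℝ≥0∞}

lemma measurable_spanningTrunc (hF : Measurable (uncurry F)) (n : ℕ) :
    Measurable (uncurry (spanningTrunc ν F n)) :=
  (hF.min measurable_const).indicator
    ((measurableSet_spanningSets ν n).prod (measurableSet_spanningSets ν n))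

lemma monotone_spanningTrunc : Monotone (spanningTrunc ν F) := fun _ _ hnk _ _ =>
  (indicator_le_indicator_of_subset
      (prod_mono (monotone_spanningSets ν hnk) (monotone_spanningSets ν hnk))
      (fun _ => zero_le) _).trans
    (indicator_le_indicator (min_le_min_left _ (Nat.cast_le.2 hnk)))

lemma spanningTrunc_le (n : ℕ) (x y : X) : spanningTrunc ν F n x y ≤ n :=
  indicator_le (fun _ _ => min_le_right _ _) _

lemma mem_of_spanningTrunc_ne_zero {n : ℕ} {x y : X} (h : spanningTrunc ν F n x y ≠ 0) :
    x ∈ spanningSets ν n ∧ y ∈ spanningSets ν n :=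
  Set.mem_of_indicator_ne_zero (s := spanningSets ν n ×ˢ spanningSets ν n)
    (f := fun p => min (uncurry F p) n) h

lemma spanningTrunc_swap (n : ℕ) (x y : X) :
    spanningTrunc ν (fun x y => F y x) n x y = spanningTrunc ν F n y x := by
  classical
  simp only [spanningTrunc, Set.indicator_apply, Set.mem_prod, and_comm, uncurry_apply_pair]

lemma iSup_spanningTrunc (x y : X) : ⨆ n, spanningTrunc ν F n x y = F x y := by
  refine le_antisymm (iSup_le fun n => indicator_le (fun _ _ => min_le_left _ _) _) ?_
  set N := max (spanningSetsIndex ν x) (spanningSetsIndex ν y)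
  have hmem : ∀ n, (x, y) ∈ spanningSets ν (max n N) ×ˢ spanningSets ν (max n N) := fun n =>
    ⟨mem_spanningSets_of_index_le ν x (le_max_left _ _ |>.trans (le_max_right _ _)),
      mem_spanningSets_of_index_le ν y (le_max_right _ _ |>.trans (le_max_right _ _))⟩
  calc F x y = ⨆ n : ℕ, min (F x y) n := by
        rw [← inf_iSup_eq, ENNReal.iSup_natCast, inf_top_eq]
    _ ≤ ⨆ n, spanningTrunc ν F n x y := iSup_le fun n =>
        le_iSup_of_le (max n N) <| by
          rw [spanningTrunc, indicator_of_mem (hmem n)]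
          exact min_le_min_left _ (Nat.cast_le.2 (le_max_left _ _))

end Truncation

namespace Reversible

variable {X : Type*} [MeasurableSpace X] {m : X → Measure X} {ν : Measure X}

lemma lintegral_lintegral_swap_of_le (hm : IsRandomWalk m) (hrev : Reversible m ν)
    {F : X → X → ℝ≥0∞} (hF : Measurable (uncurry F)) {S : Set X} (hS : MeasurableSet S)
    (hSν : ν S ≠ ∞) {C : ℝ≥0∞} (hC : C ≠ ∞) (hFC : ∀ x y, F x y ≤ C)
    (hFS : ∀ x y, F x y ≠ 0 → x ∈ S ∧ y ∈ S) :
    ∫⁻ x, ∫⁻ y, F x y ∂m x ∂ν = ∫⁻ x, ∫⁻ y, F y x ∂m x ∂ν := by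
  have hF' : Measurable (uncurry fun x y => F y x) := hF.comp measurable_swap
  have hreal := hrev (fun x y => (F x y).toReal) hF.ennreal_toReal
    ⟨C.toReal, fun x y => by
      rw [abs_of_nonneg ENNReal.toReal_nonneg]; exact ENNReal.toReal_mono hC (hFC x y)⟩
  rw [hm.integral_integral_toReal hF hC hFC,
    hm.integral_integral_toReal hF' hC fun x y => hFC y x] at hreal
  have hfin : ∀ G : X → X → ℝ≥0∞, (∀ x y, G x y ≤ C) → (∀ x y, G x y ≠ 0 → x ∈ S) →
      ∫⁻ x, ∫⁻ y, G x y ∂m x ∂ν ≠ ∞ := fun G hGC hGS =>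
    ne_top_of_le_ne_top (ENNReal.mul_ne_top hC hSν) (hm.lintegral_lintegral_le hS hGC hGS)
  exact (ENNReal.toReal_eq_toReal_iff' (hfin F hFC fun x y h => (hFS x y h).1)
    (hfin _ (fun x y => hFC y x) fun x y h => (hFS y x h).2)).1 hreal

variable [SigmaFinite ν]

lemma lintegral_lintegral_swap (hm : IsRandomWalk m) (hrev : Reversible m ν)
    {F : X → X → ℝ≥0∞} (hF : Measurable (uncurry F)) :
    ∫⁻ x, ∫⁻ y, F x y ∂m x ∂ν = ∫⁻ x, ∫⁻ y, F y x ∂m x ∂ν := by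
  have hF' : Measurable (uncurry fun x y => F y x) := hF.comp measurable_swap
  calc ∫⁻ x, ∫⁻ y, F x y ∂m x ∂ν = ∫⁻ x, ∫⁻ y, ⨆ n, spanningTrunc ν F n x y ∂m x ∂ν := by
        simp_rw [iSup_spanningTrunc]
    _ = ⨆ n, ∫⁻ x, ∫⁻ y, spanningTrunc ν F n x y ∂m x ∂ν :=
        hm.lintegral_lintegral_iSup (measurable_spanningTrunc hF) monotone_spanningTrunc
    _ = ⨆ n, ∫⁻ x, ∫⁻ y, spanningTrunc ν F n y x ∂m x ∂ν := iSup_congr fun n =>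
        hrev.lintegral_lintegral_swap_of_le hm (measurable_spanningTrunc hF n)
          (measurableSet_spanningSets ν n) (measure_spanningSets_lt_top ν n).ne
          (ENNReal.natCast_ne_top n) (spanningTrunc_le n) fun _ _ => mem_of_spanningTrunc_ne_zero
    _ = ⨆ n, ∫⁻ x, ∫⁻ y, spanningTrunc ν (fun x y => F y x) n x y ∂m x ∂ν := by
        simp_rw [spanningTrunc_swap]
    _ = ∫⁻ x, ∫⁻ y, ⨆ n, spanningTrunc ν (fun x y => F y x) n x y ∂m x ∂ν :=
        (hm.lintegral_lintegral_iSup (measurable_spanningTrunc hF') monotone_spanningTrunc).symm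
    _ = ∫⁻ x, ∫⁻ y, F y x ∂m x ∂ν := by
        simp_rw [iSup_spanningTrunc]

lemma ae_ae (hm : IsRandomWalk m) (hrev : Reversible m ν) {p : X → Prop}
    (hp : ∀ᵐ x ∂ν, p x) : ∀ᵐ x ∂ν, ∀ᵐ y ∂m x, p y := by
  set N := toMeasurable ν {x | ¬p x}
  have hN : MeasurableSet N := measurableSet_toMeasurable _ _
  have hswap := hrev.lintegral_lintegral_swap hm
    (F := fun _ y => N.indicator 1 y) ((measurable_const.indicator hN).comp measurable_snd)
  have hzero : ∫⁻ x, m x N ∂ν = 0 := by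
    simp only [lintegral_indicator_one hN, lintegral_const] at hswap
    calc ∫⁻ x, m x N ∂ν = ∫⁻ x, N.indicator 1 x ∂ν := hswap.trans <| lintegral_congr fun x => by
          have := hm.1 x
          rw [measure_univ, mul_one]
      _ = 0 := by rw [lintegral_indicator_one hN, measure_toMeasurable, ← ae_iff.1 hp]
  filter_upwards [(lintegral_eq_zero_iff (hm.2 N hN)).1 hzero] with x hx
  exact measure_mono_null (subset_toMeasurable _ _) hx

end Reversible

section Laplacian

variable {X : Type*} [MeasurableSpace X] {m : X → Measure X} {u : X → ℝ} {x : X}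
  [IsProbabilityMeasure (m x)]

lemma integrable_of_deltaM_ne_zero (h : deltaM m u x ≠ 0) : Integrable u (m x) := by
  have hsub : Integrable (fun y => u y - u x) (m x) := by
    -- otherwise `deltaM m u x` is the junk value `0`
    by_contra hni
    exact h (integral_undef hni)
  simpa using (integrable_add_const_iff (c := u x)).2 hsub

lemma integral_eq_add_deltaM (hu : Integrable u (m x)) :
    ∫ y, u y ∂m x = u x + deltaM m u x := by
  rw [deltaM, integral_sub hu (integrable_const _)]
  simp

end Laplacian

lemma measurableSet_mBoundary {X : Type*} [MeasurableSpace X] {m : X → Measure X}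
    (hm : IsRandomWalk m) {Ω : Set X} (hΩ : MeasurableSet Ω) :
    MeasurableSet (mBoundary m Ω) :=
  hΩ.compl.inter (hm.2 Ω hΩ measurableSet_Ioi)

lemma MemL20.ae_eq_zero_of_notMem {X : Type*} [MeasurableSpace X] {m : X → Measure X}
    {ν : Measure X} {Ω : Set X} {v : X → ℝ} (hv : MemL20 m ν Ω v)
    (hB : MeasurableSet (mBoundary m Ω)) : ∀ᵐ x ∂ν, x ∉ Ω → v x = 0 := by
  filter_upwards [(ae_restrict_iff' hB).1 hv.2.2.1] with x hx hxΩ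
  by_cases hxB : x ∈ mBoundary m Ω
  · exact hx hxB
  · exact hv.2.2.2 x (by simp [mClosure, hxΩ, hxB])

lemma HypH.pos {f : ℝ → ℝ} {c₁ : ℝ} (hH : HypH f c₁) {s : ℝ} (hs : 0 ≤ s) : 0 < f s := by
  obtain ⟨-, -, hf0, hc₁, hfs⟩ := hH
  rcases hs.eq_or_lt with rfl | hs
  · exact hf0
  · exact (mul_pos hc₁ hs).trans_le (hfs s hs.le)

section Green

variable {X : Type*} [MeasurableSpace X] {m : X → Measure X} {ν : Measure X} {S : Set X}
  {g h : X → ℝ}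

lemma IsRandomWalk.setIntegral_mul_integral_eq_toReal (hm : IsRandomWalk m)
    (hS : MeasurableSet S) (hg : Measurable g) (hh : Measurable h)
    (hg0 : ∀ᵐ x ∂ν.restrict S, 0 ≤ g x) (hgS : ∀ᵐ x ∂ν, x ∉ S → g x = 0)
    (hh0 : ∀ᵐ x ∂ν.restrict S, 0 ≤ᵐ[m x] h) (hhi : ∀ᵐ x ∂ν.restrict S, Integrable h (m x)) :
    ∫ x in S, g x * ∫ y, h y ∂m x ∂ν =
      (∫⁻ x, ENNReal.ofReal (g x) * ∫⁻ y, ENNReal.ofReal (h y) ∂m x ∂ν).toReal := by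
  set G : X → ℝ≥0∞ := fun x => ENNReal.ofReal (g x) * ∫⁻ y, ENNReal.ofReal (h y) ∂m x
  have hG : Measurable G := hg.ennreal_ofReal.mul
    (hm.measurable_lintegral (F := fun _ y => ENNReal.ofReal (h y))
      (hh.comp measurable_snd).ennreal_ofReal)
  have hG_eq : ∀ᵐ x ∂ν.restrict S, G x = ENNReal.ofReal (g x * ∫ y, h y ∂m x) := by
    filter_upwards [hg0, hh0, hhi] with x hgx hhx hix
    rw [ENNReal.ofReal_mul hgx, ofReal_integral_eq_lintegral_ofReal hix hhx]
  have hG_compl : ∫⁻ x in Sᶜ, G x ∂ν = 0 := by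
    refine (lintegral_congr_ae ?_).trans lintegral_zero
    filter_upwards [ae_restrict_mem hS.compl, ae_restrict_of_ae hgS] with x hxS hgx
    simp [G, hgx hxS]
  calc ∫ x in S, g x * ∫ y, h y ∂m x ∂ν = ∫ x in S, (G x).toReal ∂ν := by
        refine integral_congr_ae ?_
        filter_upwards [hG_eq, hg0, hh0] with x hGx hgx hhx
        rw [hGx, ENNReal.toReal_ofReal (mul_nonneg hgx (integral_nonneg_of_ae hhx))]
    _ = (∫⁻ x in S, G x ∂ν).toReal := by
        refine integral_toReal hG.aemeasurable ?_
        filter_upwards [hG_eq] with x hGx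
        exact hGx ▸ ENNReal.ofReal_lt_top
    _ = (∫⁻ x, G x ∂ν).toReal := by
        rw [← lintegral_add_compl (μ := ν) G hS, hG_compl, add_zero]

lemma Reversible.setIntegral_mul_integral_comm [SigmaFinite ν] (hm : IsRandomWalk m)
    (hrev : Reversible m ν) (hS : MeasurableSet S) (hg : Measurable g) (hh : Measurable h)
    (hg0 : 0 ≤ᵐ[ν] g) (hh0 : 0 ≤ᵐ[ν] h)
    (hgS : ∀ᵐ x ∂ν, x ∉ S → g x = 0) (hhS : ∀ᵐ x ∂ν, x ∉ S → h x = 0)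
    (hgi : ∀ᵐ x ∂ν.restrict S, Integrable g (m x)) (hhi : ∀ᵐ x ∂ν.restrict S, Integrable h (m x)) :
    ∫ x in S, g x * ∫ y, h y ∂m x ∂ν = ∫ x in S, h x * ∫ y, g y ∂m x ∂ν := by
  rw [hm.setIntegral_mul_integral_eq_toReal hS hg hh (ae_restrict_of_ae hg0) hgS
      (ae_restrict_of_ae (hrev.ae_ae hm hh0)) hhi,
    hm.setIntegral_mul_integral_eq_toReal hS hh hg (ae_restrict_of_ae hh0) hhS
      (ae_restrict_of_ae (hrev.ae_ae hm hg0)) hgi]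
  have hswap := hrev.lintegral_lintegral_swap hm
    (F := fun x y => ENNReal.ofReal (g x) * ENNReal.ofReal (h y))
    (hg.ennreal_ofReal.comp measurable_fst |>.mul (hh.ennreal_ofReal.comp measurable_snd))
  simp only [lintegral_const_mul' _ _ ENNReal.ofReal_ne_top] at hswap
  simp_rw [lintegral_mul_const' _ _ ENNReal.ofReal_ne_top, mul_comm] at hswap
  rw [hswap]

end Green

lemma setIntegral_pos_of_ae_pos {X : Type*} [MeasurableSpace X] {ν : Measure X} {S : Set X}
    {F : X → ℝ} (hF : ∀ᵐ x ∂ν.restrict S, 0 < F x) (hFi : IntegrableOn F S ν) (hS : ν S ≠ 0) :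
    0 < ∫ x in S, F x ∂ν := by
  rw [integral_pos_iff_support_of_nonneg_ae (hF.mono fun _ hx => hx.le) hFi]
  refine pos_iff_ne_zero.2 fun h0 => hS ?_
  have hfalse : ∀ᵐ x ∂ν.restrict S, False := by
    filter_upwards [measure_eq_zero_iff_ae_notMem.1 h0, hF] with x hx hpos
    exact hx hpos.ne'
  rw [← Measure.restrict_eq_zero, ← ae_eq_bot, ← Filter.eventually_false_iff_eq_bot]
  exact hfalse

section Problem

variable {X : Type*} [MeasurableSpace X] {m : X → Measure X} {ν : Measure X} {Ω : Set X}
  {lam : ℝ} {φ : X → ℝ} {α M : ℝ}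

namespace Standing

lemma ae_nonneg_eigenfunction (hst : Standing m ν Ω lam φ α M) : 0 ≤ᵐ[ν] φ := by
  refine ae_of_ae_restrict_of_ae_restrict_compl Ω ?_ ?_
  · filter_upwards [hst.hphiLB] with x hx using hst.halphaPos.le.trans hx
  · filter_upwards [ae_restrict_mem hst.hmeasΩ.compl, ae_restrict_of_ae
      (hst.hphiMem.ae_eq_zero_of_notMem (measurableSet_mBoundary hst.hrw hst.hmeasΩ))]
      with x hxΩ hx
    exact (hx hxΩ).ge

lemma ae_integral_eigenfunction (hst : Standing m ν Ω lam φ α M) :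
    ∀ᵐ x ∂ν.restrict Ω, Integrable φ (m x) ∧ ∫ y, φ y ∂m x = (1 - lam) * φ x := by
  filter_upwards [hst.heig, hst.hphiLB] with x heig hαx
  have := hst.hrw.1 x
  have hφx : 0 < lam * φ x := mul_pos hst.hlamPos (hst.halphaPos.trans_le hαx)
  have hint := integrable_of_deltaM_ne_zero (u := φ) (by linarith : deltaM m φ x ≠ 0)
  refine ⟨hint, ?_⟩
  rw [integral_eq_add_deltaM hint]
  linarith

lemma integrableOn_eigenfunction_mul (hst : Standing m ν Ω lam φ α M) {u : X → ℝ} (hu : MemL20 m ν Ω u) :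
    IntegrableOn (fun x => φ x * u x) Ω ν := by
  have : IsFiniteMeasure (ν.restrict (mClosure m Ω)) := isFiniteMeasure_restrict.2 hst.hfin.ne
  refine ((show IntegrableOn u (mClosure m Ω) ν from hu.2.1.integrable one_le_two).mono_set
    subset_union_left).bdd_mul
    (c := M) hst.hphiMem.1.aestronglyMeasurable ?_
  filter_upwards [hst.hphiLB, hst.hphiUB] with x hαx hxM
  rw [Real.norm_of_nonneg (hst.halphaPos.le.trans hαx)]
  exact hxM

/-- Green's formula against the first eigenfunction. -/
lemma setIntegral_eigenfunction_mul_integral (hst : Standing m ν Ω lam φ α M) {u : X → ℝ}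
    (hu : MemL20 m ν Ω u) (hu0 : 0 ≤ᵐ[ν] u) (hui : ∀ᵐ x ∂ν.restrict Ω, Integrable u (m x)) :
    ∫ x in Ω, φ x * ∫ y, u y ∂m x ∂ν = (1 - lam) * ∫ x in Ω, φ x * u x ∂ν := by
  have := hst.hsigma
  have hB := measurableSet_mBoundary hst.hrw hst.hmeasΩ
  rw [hst.hrev.setIntegral_mul_integral_comm hst.hrw hst.hmeasΩ hst.hphiMem.1 hu.1
    hst.ae_nonneg_eigenfunction hu0 (hst.hphiMem.ae_eq_zero_of_notMem hB)
    (hu.ae_eq_zero_of_notMem hB) (hst.ae_integral_eigenfunction.mono fun _ hx => hx.1) hui,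
    ← integral_const_mul]
  refine integral_congr_ae ?_
  filter_upwards [hst.ae_integral_eigenfunction] with x hx
  rw [hx.2]
  ring

end Standing

namespace IsSol

variable {l : ℝ} {f : ℝ → ℝ} {u : X → ℝ}

lemma ae_nonneg (hu : IsSol m ν Ω l f u) (hm : IsRandomWalk m) (hΩ : MeasurableSet Ω) :
    0 ≤ᵐ[ν] u := by
  refine ae_of_ae_restrict_of_ae_restrict_compl Ω
    (ae_restrict_of_ae_restrict_of_subset subset_union_left hu.2.1) ?_
  filter_upwards [ae_restrict_mem hΩ.compl, ae_restrict_of_ae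
      (hu.1.ae_eq_zero_of_notMem (measurableSet_mBoundary hm hΩ))] with x hxΩ hx
  exact (hx hxΩ).ge

lemma ae_integral_eq (hu : IsSol m ν Ω l f u) (hm : IsRandomWalk m) {c₁ : ℝ} (hH : HypH f c₁)
    (hl : 0 < l) :
    ∀ᵐ x ∂ν.restrict Ω, Integrable u (m x) ∧ ∫ y, u y ∂m x = u x - l * f (u x) := by
  filter_upwards [hu.2.2, ae_restrict_of_ae_restrict_of_subset subset_union_left hu.2.1]
    with x hx hux
  have := hm.1 x
  have hfx : 0 < l * f (u x) := mul_pos hl (hH.pos hux)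
  have hint := integrable_of_deltaM_ne_zero (u := u) (by linarith : deltaM m u x ≠ 0)
  refine ⟨hint, ?_⟩
  rw [integral_eq_add_deltaM hint]
  linarith

lemma ae_eigenfunction_mul_bounds (hu : IsSol m ν Ω l f u) (hst : Standing m ν Ω lam φ α M)
    {c₁ : ℝ} (hH : HypH f c₁) (hl : 0 < l) :
    ∀ᵐ x ∂ν.restrict Ω, 0 ≤ φ x * ∫ y, u y ∂m x ∧
      φ x * ∫ y, u y ∂m x ≤ (1 - l * c₁) * (φ x * u x) ∧ 0 < φ x * u x := by
  have := hst.hsigma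
  have hu0 := hu.ae_nonneg hst.hrw hst.hmeasΩ
  filter_upwards [hu.ae_integral_eq hst.hrw hH hl, ae_restrict_of_ae hu0,
    ae_restrict_of_ae (hst.hrev.ae_ae hst.hrw hu0), hst.hphiLB] with x hx hux hxm hαx
  have hφx : 0 < φ x := hst.halphaPos.trans_le hαx
  have hmean : 0 ≤ ∫ y, u y ∂m x := integral_nonneg_of_ae hxm
  have hfx : 0 < l * f (u x) := mul_pos hl (hH.pos hux)
  have hcf : c₁ * u x ≤ f (u x) := hH.2.2.2.2 (u x) hux
  rw [hx.2] at hmean ⊢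
  refine ⟨mul_nonneg hφx.le hmean, ?_, mul_pos hφx (by linarith)⟩
  nlinarith [mul_nonneg (mul_nonneg hl.le hφx.le) (sub_nonneg.2 hcf)]

end IsSol

end Problem

theorem necessary_bound_on_parameter_general
    {X : Type*} [MeasurableSpace X]
    (m : X → MeasureTheory.Measure X) (ν : MeasureTheory.Measure X)
    (Ω : Set X) (lam : ℝ) (φ : X → ℝ) (α M : ℝ)
    (hst : Standing m ν Ω lam φ α M)
    (f : ℝ → ℝ) (c₁ : ℝ) (hH : HypH f c₁)
    (l : ℝ) (hl : 0 < l)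
    (hsol : ∃ u : X → ℝ, IsSol m ν Ω l f u) :
    l ≤ lam / c₁ := by
  obtain ⟨u, hu⟩ := hsol
  have hu0 := hu.ae_nonneg hst.hrw hst.hmeasΩ
  have hu_walk := hu.ae_integral_eq hst.hrw hH hl
  have hbounds := hu.ae_eigenfunction_mul_bounds hst hH hl
  have hP : 0 < ∫ x in Ω, φ x * u x ∂ν := setIntegral_pos_of_ae_pos
    (hbounds.mono fun _ hx => hx.2.2) (hst.integrableOn_eigenfunction_mul hu.1) hst.hpos.ne'
  have hle : (1 - lam) * ∫ x in Ω, φ x * u x ∂ν ≤ (1 - l * c₁) * ∫ x in Ω, φ x * u x ∂ν := by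
    rw [← hst.setIntegral_eigenfunction_mul_integral hu.1 hu0 (hu_walk.mono fun _ hx => hx.1),
      ← integral_const_mul]
    exact integral_mono_of_nonneg (hbounds.mono fun _ hx => hx.1)
      ((hst.integrableOn_eigenfunction_mul hu.1).const_mul _) (hbounds.mono fun _ hx => hx.2.1)
  rw [le_div_iff₀ hH.2.2.2.1]
  nlinarith

/-- **Necessary bound on the parameter**: if `f` satisfies hypotheses (H) with constant `c₁`
and `(P(λ f))` has a solution with `λ > 0`, then `λ ≤ λ_m(Ω)/c₁`. -/
theorem necessary_bound_on_parameter
    {X : Type*} [MeasurableSpace X] [MeasurableSpace.CountablyGenerated X]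
    (m : X → MeasureTheory.Measure X) (ν : MeasureTheory.Measure X)
    (Ω : Set X) (lam : ℝ) (φ : X → ℝ) (α M : ℝ)
    (hst : Standing m ν Ω lam φ α M)
    (f : ℝ → ℝ) (c₁ : ℝ) (hH : HypH f c₁)
    (l : ℝ) (hl : 0 < l)
    (hsol : ∃ u : X → ℝ, IsSol m ν Ω l f u) :
    l ≤ lam / c₁ :=
  necessary_bound_on_parameter_general m ν Ω lam φ α M hst f c₁ hH l hl hsol
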